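/- arXiv:2602.07751 — 3 statements merged into one kernel-verified Lean document; each statement's English description precedes it below -/
import Mathlib

section
/- Let n be even. The fundamental domain H_n = {0,…,n/2−1}² meets every ρ-orbit of G_n in exactly one point, where ρ(i,j) = (j, n−1−i). -/
def InGrid (n : ℕ) (p : ℤ × ℤ) : Prop :=
  0 ≤ p.1 ∧ p.1 < n ∧ 0 ≤ p.2 ∧ p.2 < n

def rho (n : ℕ) (p : ℤ × ℤ) : ℤ × ℤ := (p.2, (n : ℤ) - 1 - p.1)

def rhoOrbit (n : ℕ) (p : ℤ × ℤ) : Finset (ℤ × ℤ) :=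
  {p, rho n p, rho n (rho n p), rho n (rho n (rho n p))}

def InH (n : ℕ) (p : ℤ × ℤ) : Prop :=
  0 ≤ p.1 ∧ p.1 < (n / 2 : ℕ) ∧ 0 ≤ p.2 ∧ p.2 < (n / 2 : ℕ)

theorem fundamental_domain_meets_orbit_once (n : ℕ) (hn : Even n)
    (p : ℤ × ℤ) (hp : InGrid n p) :
    ∃! q : ℤ × ℤ, q ∈ rhoOrbit n p ∧ InH n q := by
  obtain ⟨i, j⟩ := p
  obtain ⟨k, hk⟩ := hn
  simp only [InGrid] at hp
  obtain ⟨h1, h2, h3, h4⟩ := hp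
  simp only [rhoOrbit, rho, InH, Finset.mem_insert, Finset.mem_singleton, Prod.mk.injEq]
  rcases lt_or_ge i ((n / 2 : ℕ) : ℤ) with hi | hi <;>
    rcases lt_or_ge j ((n / 2 : ℕ) : ℤ) with hj | hj
  · exact ⟨(i, j), ⟨Or.inl rfl, h1, hi, h3, hj⟩, by
      rintro ⟨x, y⟩ ⟨(⟨rfl, rfl⟩ | ⟨rfl, rfl⟩ | ⟨rfl, rfl⟩ | ⟨rfl, rfl⟩), hx1, hx2, hy1, hy2⟩ <;>
        simp_all <;> omega⟩
  · exact ⟨((n : ℤ) - 1 - j, i), ⟨Or.inr (Or.inr (Or.inr (by rw [Prod.mk.injEq]; omega))), by omega, by omega, by omega, by omega⟩, by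
      rintro ⟨x, y⟩ ⟨(⟨rfl, rfl⟩ | ⟨rfl, rfl⟩ | ⟨rfl, rfl⟩ | ⟨rfl, rfl⟩), hx1, hx2, hy1, hy2⟩ <;>
        simp_all <;> omega⟩
  · exact ⟨(j, (n : ℤ) - 1 - i), ⟨Or.inr (Or.inl (by rw [Prod.mk.injEq]; omega)), by omega, by omega, by omega, by omega⟩, by
      rintro ⟨x, y⟩ ⟨(⟨rfl, rfl⟩ | ⟨rfl, rfl⟩ | ⟨rfl, rfl⟩ | ⟨rfl, rfl⟩), hx1, hx2, hy1, hy2⟩ <;>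
        simp_all <;> omega⟩
  · exact ⟨((n : ℤ) - 1 - i, (n : ℤ) - 1 - j), ⟨Or.inr (Or.inr (Or.inl (by rw [Prod.mk.injEq]; omega))), by omega, by omega, by omega, by omega⟩, by
      rintro ⟨x, y⟩ ⟨(⟨rfl, rfl⟩ | ⟨rfl, rfl⟩ | ⟨rfl, rfl⟩ | ⟨rfl, rfl⟩), hx1, hx2, hy1, hy2⟩ <;>
        simp_all <;> omega⟩
end

section
/- The number of collinear triples of points in the n × n grid equals 2·∑_{a=1}^{n−1} ∑_{b=1}^{n−1} (n−a)(n−b)·gcd(a,b) − (1/6)·n²·(n²−1). -/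
/-!
Every collinear triple has exactly one point strictly between the other two, so the ordered
triples `(u, v, m)` of grid points with `m` strictly between `u` and `v` count each collinear
triple twice. Writing `v - u = g • e` with `e` primitive and `g = gcd (v - u)`, the lattice points
strictly between `u` and `v` are the `u + k • e` with `0 < k < g`, and by convexity they all lie
in the grid. It remains to sum `gcd (v - u) - 1` over pairs of grid points: the summand only
depends on the absolute coordinate differences `(a, b)`, a difference with `a, b > 0` arises from
`4 (n - a) (n - b)` ordered pairs, and the `- 1`s together with the pairs with `a = 0` or `b = 0`
give the correction term.
-/

def Collinear3 (p q r : ℤ × ℤ) : Prop :=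
  (q.1 - p.1) * (r.2 - p.2) - (q.2 - p.2) * (r.1 - p.1) = 0

/-- The `n × n` grid as a finite set of lattice points. -/
def gridF (n : ℕ) : Finset (ℤ × ℤ) :=
  (Finset.range n ×ˢ Finset.range n).image (fun p => ((p.1 : ℤ), (p.2 : ℤ)))

open Finset

lemma IsCoprime.exists_eq_mul_of_mul_eq_mul {R : Type*} [CommRing R] {a b x y : R}
    (h : IsCoprime a b) (hxy : a * y = b * x) : ∃ k, x = k * a ∧ y = k * b := by
  obtain ⟨u, v, huv⟩ := h
  exact ⟨u * x + v * y, by linear_combination -x * huv - v * hxy,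
    by linear_combination -y * huv + u * hxy⟩

lemma IsCoprime.prod_ne_zero {e : ℤ × ℤ} (he : IsCoprime e.1 e.2) : e ≠ 0 := by
  rintro rfl
  exact not_isCoprime_zero_zero he

lemma exists_isCoprime_eq_gcd_smul {d : ℤ × ℤ} (hd : d ≠ 0) :
    ∃ e : ℤ × ℤ, IsCoprime e.1 e.2 ∧ d = (Int.gcd d.1 d.2 : ℤ) • e := by
  have hg : 0 < Int.gcd d.1 d.2 :=
    Int.gcd_pos_iff.mpr (by contrapose! hd; exact Prod.ext hd.1 hd.2)
  refine ⟨(d.1 / Int.gcd d.1 d.2, d.2 / Int.gcd d.1 d.2), ?_, ?_⟩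
  · exact Int.isCoprime_iff_gcd_eq_one.mpr (Int.gcd_div_gcd_div_gcd hg)
  · ext
    · exact (Int.mul_ediv_cancel' (Int.gcd_dvd_left _ _)).symm
    · exact (Int.mul_ediv_cancel' (Int.gcd_dvd_right _ _)).symm

lemma exists_isCoprime_eq_add_gcd_smul {p q : ℤ × ℤ} (hpq : p ≠ q) :
    ∃ e : ℤ × ℤ, IsCoprime e.1 e.2 ∧ q = p + (Int.gcd (q.1 - p.1) (q.2 - p.2) : ℤ) • e := by
  obtain ⟨e, he, hqp⟩ := exists_isCoprime_eq_gcd_smul (sub_ne_zero.mpr hpq.symm)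
  exact ⟨e, he, eq_add_of_sub_eq' hqp⟩

lemma collinear3_comm_right {p q r : ℤ × ℤ} : Collinear3 p q r ↔ Collinear3 p r q := by
  unfold Collinear3
  constructor <;> intro h <;> linarith

lemma Collinear3.exists_eq_add_smul {p r e : ℤ × ℤ} {g : ℤ} (he : IsCoprime e.1 e.2)
    (hg : g ≠ 0) (h : Collinear3 p (p + g • e) r) : ∃ k : ℤ, r = p + k • e := by
  have hcross : e.1 * (r.2 - p.2) = e.2 * (r.1 - p.1) := by
    have : g * (e.1 * (r.2 - p.2) - e.2 * (r.1 - p.1)) = 0 := by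
      simp only [Collinear3, Prod.fst_add, Prod.snd_add, Prod.smul_fst, Prod.smul_snd,
        smul_eq_mul] at h
      linear_combination h
    linear_combination (mul_eq_zero.mp this).resolve_left hg
  obtain ⟨k, h1, h2⟩ := he.exists_eq_mul_of_mul_eq_mul hcross
  exact ⟨k, Prod.ext (by simp; linarith) (by simp; linarith)⟩

/-- `m` lies in the open segment from `u` to `v`: the three points are collinear and
`m - u`, `v - m` point the same way. -/
def StrictlyBetween (u m v : ℤ × ℤ) : Prop :=
  Collinear3 u m v ∧ 0 < (m.1 - u.1) * (v.1 - m.1) + (m.2 - u.2) * (v.2 - m.2)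

instance (u m v : ℤ × ℤ) : Decidable (StrictlyBetween u m v) := by
  unfold StrictlyBetween Collinear3
  infer_instance

namespace StrictlyBetween

variable {u m v : ℤ × ℤ}

lemma symm (h : StrictlyBetween u m v) : StrictlyBetween v m u := by
  obtain ⟨h1, h2⟩ := h
  exact ⟨by unfold Collinear3 at *; linarith, by linarith⟩

lemma left_ne (h : StrictlyBetween u m v) : u ≠ m := by
  rintro rfl
  simp [StrictlyBetween] at h

lemma ne_right (h : StrictlyBetween u m v) : m ≠ v := by
  rintro rfl
  simp [StrictlyBetween] at h

lemma left_ne_right (h : StrictlyBetween u m v) : u ≠ v := by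
  rintro rfl
  nlinarith [h.2, sq_nonneg (m.1 - u.1), sq_nonneg (m.2 - u.2)]

lemma not_swap_left (h : StrictlyBetween u m v) : ¬ StrictlyBetween m u v := fun h' => by
  nlinarith [h.2, h'.2, sq_nonneg (m.1 - u.1), sq_nonneg (m.2 - u.2)]

end StrictlyBetween

lemma strictlyBetween_add_smul_iff (p : ℤ × ℤ) {e : ℤ × ℤ} (he : e ≠ 0) (i j l : ℤ) :
    StrictlyBetween (p + i • e) (p + j • e) (p + l • e) ↔ 0 < (j - i) * (l - j) := by
  have hnorm : 0 < e.1 ^ 2 + e.2 ^ 2 := by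
    rcases e with ⟨a, b⟩
    have : a ≠ 0 ∨ b ≠ 0 := by contrapose! he; simp [he]
    rcases this with h | h <;> positivity
  simp only [StrictlyBetween, Collinear3, Prod.fst_add, Prod.snd_add, Prod.smul_fst,
    Prod.smul_snd, smul_eq_mul]
  constructor
  · exact fun h => (mul_pos_iff_of_pos_right hnorm).mp (h.2.trans_eq (by ring))
  · exact fun h => ⟨by ring, ((mul_pos_iff_of_pos_right hnorm).mpr h).trans_eq (by ring)⟩

lemma exists_strictlyBetween_of_collinear3 {p q r : ℤ × ℤ} (hpq : p ≠ q) (hpr : p ≠ r)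
    (hqr : q ≠ r) (h : Collinear3 p q r) :
    StrictlyBetween q p r ∨ StrictlyBetween p q r ∨ StrictlyBetween p r q := by
  obtain ⟨e, he, hqe⟩ := exists_isCoprime_eq_add_gcd_smul hpq
  generalize (Int.gcd (q.1 - p.1) (q.2 - p.2) : ℤ) = g at hqe
  subst hqe
  have hg : g ≠ 0 := by rintro rfl; simp at hpq
  obtain ⟨k, rfl⟩ := h.exists_eq_add_smul he hg
  have hk : k ≠ 0 := by rintro rfl; simp at hpr
  have hkg : k ≠ g := by rintro rfl; simp at hqr
  have iff := strictlyBetween_add_smul_iff p he.prod_ne_zero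
  have h1 := iff g 0 k
  have h2 := iff 0 g k
  have h3 := iff 0 k g
  simp only [zero_smul, add_zero, sub_zero, zero_sub] at h1 h2 h3
  rw [h1, h2, h3]
  rcases lt_or_gt_of_ne hk with hk | hk <;> rcases lt_or_gt_of_ne hkg with hkg | hkg <;>
    rcases lt_or_gt_of_ne hg with hg | hg <;>
    first
    | (left; nlinarith)
    | (right; left; nlinarith)
    | (right; right; nlinarith)

lemma mem_gridF {n : ℕ} {x : ℤ × ℤ} :
    x ∈ gridF n ↔ 0 ≤ x.1 ∧ x.1 < n ∧ 0 ≤ x.2 ∧ x.2 < n := by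
  simp only [gridF, mem_image, mem_product, mem_range]
  constructor
  · rintro ⟨⟨i, j⟩, ⟨hi, hj⟩, rfl⟩
    exact ⟨by positivity, by simpa using hi, by positivity, by simpa using hj⟩
  · rintro ⟨h1, h2, h3, h4⟩
    exact ⟨(x.1.toNat, x.2.toNat), ⟨by omega, by omega⟩, Prod.ext (by simp [h1]) (by simp [h3])⟩

lemma add_smul_mem_gridF {n : ℕ} {p e : ℤ × ℤ} {g k : ℤ} (hp : p ∈ gridF n)
    (hq : p + g • e ∈ gridF n) (hk : 0 ≤ k) (hkg : k ≤ g) : p + k • e ∈ gridF n := by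
  have interval {x a : ℤ} (hx : 0 ≤ x ∧ x < n) (hy : 0 ≤ x + g * a ∧ x + g * a < n) :
      0 ≤ x + k * a ∧ x + k * a < n := by
    rcases le_total 0 a with ha | ha <;> constructor <;> nlinarith
  simp only [mem_gridF, Prod.fst_add, Prod.snd_add, Prod.smul_fst, Prod.smul_snd,
    smul_eq_mul] at *
  obtain ⟨h1, h2⟩ := interval ⟨hp.1, hp.2.1⟩ ⟨hq.1, hq.2.1⟩
  obtain ⟨h3, h4⟩ := interval ⟨hp.2.2.1, hp.2.2.2⟩ ⟨hq.2.2.1, hq.2.2.2⟩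
  exact ⟨h1, h2, h3, h4⟩

lemma filter_strictlyBetween_add_smul {n : ℕ} {p e : ℤ × ℤ} {g : ℤ} (he : IsCoprime e.1 e.2)
    (hg : 0 < g) (hp : p ∈ gridF n) (hq : p + g • e ∈ gridF n) :
    (gridF n).filter (fun m => StrictlyBetween p m (p + g • e))
      = (Ioo 0 g).image (fun k => p + k • e) := by
  have between (k : ℤ) : StrictlyBetween p (p + k • e) (p + g • e) ↔ 0 < k ∧ k < g := by
    have h := strictlyBetween_add_smul_iff p he.prod_ne_zero 0 k g
    rw [zero_smul, add_zero, sub_zero] at h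
    rw [h]
    constructor
    · intro h
      rcases pos_and_pos_or_neg_and_neg_of_mul_pos h with h | h <;> omega
    · exact fun h => mul_pos h.1 (by omega)
  ext m
  simp only [mem_filter, mem_image, mem_Ioo]
  constructor
  · rintro ⟨-, hm⟩
    obtain ⟨k, rfl⟩ := (collinear3_comm_right.mp hm.1).exists_eq_add_smul he hg.ne'
    exact ⟨k, (between k).mp hm, rfl⟩
  · rintro ⟨k, hk, rfl⟩
    exact ⟨add_smul_mem_gridF hp hq hk.1.le hk.2.le, (between k).mpr hk⟩

-- For `p = q` both sides vanish, the right one because `Int.gcd 0 0 - 1 = 0` in `ℕ`.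
lemma card_filter_strictlyBetween {n : ℕ} {p q : ℤ × ℤ} (hp : p ∈ gridF n) (hq : q ∈ gridF n) :
    #((gridF n).filter (fun m => StrictlyBetween p m q)) = Int.gcd (q.1 - p.1) (q.2 - p.2) - 1 := by
  rcases eq_or_ne p q with rfl | hpq
  · simp [filter_eq_empty_iff.mpr fun m _ (h : StrictlyBetween p m p) => h.left_ne_right rfl]
  obtain ⟨e, he, hqe⟩ := exists_isCoprime_eq_add_gcd_smul hpq
  have hg : 0 < Int.gcd (q.1 - p.1) (q.2 - p.2) :=
    Int.gcd_pos_iff.mpr (by contrapose! hpq; exact Prod.ext (by omega) (by omega))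
  have hinj : Function.Injective fun k : ℤ => p + k • e :=
    (add_right_injective p).comp (smul_left_injective ℤ he.prod_ne_zero)
  conv_lhs => rw [hqe]
  rw [filter_strictlyBetween_add_smul he (by omega) hp (hqe ▸ hq), card_image_of_injective _ hinj,
    Int.card_Ioo]
  omega

/-- Triples `(u, v, m)` of grid points: the endpoints first, the middle point last. -/
def betweenTriples (n : ℕ) : Finset ((ℤ × ℤ) × (ℤ × ℤ) × (ℤ × ℤ)) :=
  (gridF n ×ˢ gridF n ×ˢ gridF n).filter (fun t => StrictlyBetween t.1 t.2.2 t.2.1)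

lemma card_betweenTriples (n : ℕ) :
    #(betweenTriples n) = ∑ u ∈ gridF n, ∑ v ∈ gridF n, (Int.gcd (v.1 - u.1) (v.2 - u.2) - 1) := by
  rw [betweenTriples, card_filter, sum_product]
  refine sum_congr rfl fun u hu => ?_
  rw [sum_product]
  refine sum_congr rfl fun v hv => ?_
  rw [← card_filter, card_filter_strictlyBetween hu hv]

lemma filter_betweenTriples_eq_pair {n : ℕ} {u m v : ℤ × ℤ} (hu : u ∈ gridF n)
    (hm : m ∈ gridF n) (hv : v ∈ gridF n) (h : StrictlyBetween u m v) :
    (betweenTriples n).filter (fun t => ({t.1, t.2.1, t.2.2} : Finset (ℤ × ℤ)) = {u, v, m})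
      = {(u, v, m), (v, u, m)} := by
  -- `m` is the only point of `{u, v, m}` strictly between the other two
  have h₁ := h.not_swap_left
  have h₂ : ¬ StrictlyBetween v u m := fun h' => h₁ h'.symm
  have h₃ := h.symm.not_swap_left
  have h₄ : ¬ StrictlyBetween u v m := fun h' => h₃ h'.symm
  have hum := h.left_ne
  have hmv := h.ne_right
  have huv := h.left_ne_right
  ext ⟨a, b, c⟩
  simp only [betweenTriples, mem_filter, mem_product, mem_insert, mem_singleton, Prod.mk.injEq]
  constructor
  · rintro ⟨⟨-, hbt⟩, hset⟩
    have mem {x} (hx : x ∈ ({a, b, c} : Finset (ℤ × ℤ))) : x = u ∨ x = v ∨ x = m := by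
      simpa [hset] using hx
    have hac := hbt.left_ne
    have hcb := hbt.ne_right
    have hab := hbt.left_ne_right
    rcases mem (x := a) (by simp) with rfl | rfl | rfl <;>
      rcases mem (x := b) (by simp) with rfl | rfl | rfl <;>
      rcases mem (x := c) (by simp) with rfl | rfl | rfl <;> simp_all
  · rintro (⟨rfl, rfl, rfl⟩ | ⟨rfl, rfl, rfl⟩)
    · exact ⟨⟨⟨hu, hv, hm⟩, h⟩, rfl⟩
    · exact ⟨⟨⟨hv, hu, hm⟩, h.symm⟩, insert_comm _ _ _⟩

lemma card_filter_betweenTriples_eq_two {n : ℕ} {u m v : ℤ × ℤ} (hu : u ∈ gridF n)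
    (hm : m ∈ gridF n) (hv : v ∈ gridF n) (h : StrictlyBetween u m v) :
    #((betweenTriples n).filter
      (fun t => ({t.1, t.2.1, t.2.2} : Finset (ℤ × ℤ)) = {u, v, m})) = 2 := by
  rw [filter_betweenTriples_eq_pair hu hm hv h,
    card_pair fun he => h.left_ne_right (congrArg Prod.fst he)]

open Classical in
lemma card_betweenTriples_eq_two_mul (n : ℕ) :
    #(betweenTriples n) = 2 * #(((gridF n).powersetCard 3).filter (fun s =>
        ∃ p ∈ s, ∃ q ∈ s, ∃ r ∈ s, p ≠ q ∧ p ≠ r ∧ q ≠ r ∧ Collinear3 p q r)) := by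
  rw [card_eq_sum_card_fiberwise (f := fun t => ({t.1, t.2.1, t.2.2} : Finset (ℤ × ℤ))), mul_comm,
    ← smul_eq_mul, ← sum_const]
  · refine sum_congr rfl fun s hs => ?_
    simp only [mem_filter, mem_powersetCard] at hs
    obtain ⟨⟨hsub, hcard⟩, p, hp, q, hq, r, hr, hpq, hpr, hqr, hcol⟩ := hs
    have hs : s = {p, q, r} := (eq_of_subset_of_card_le (by simp [insert_subset_iff, *])
      (by rw [hcard, card_eq_three.mpr ⟨p, q, r, hpq, hpr, hqr, rfl⟩])).symm
    subst hs
    have hp := hsub hp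
    have hq := hsub hq
    have hr := hsub hr
    rcases exists_strictlyBetween_of_collinear3 hpq hpr hqr hcol with h | h | h
    · rw [insert_comm p, pair_comm p r, card_filter_betweenTriples_eq_two hq hp hr h]
    · rw [pair_comm q r, card_filter_betweenTriples_eq_two hp hq hr h]
    · rw [card_filter_betweenTriples_eq_two hp hr hq h]
  · rintro ⟨u, v, m⟩ ht
    simp only [betweenTriples, mem_coe, mem_filter, mem_product] at ht
    obtain ⟨⟨hu, hv, hm⟩, h⟩ := ht
    simp only [coe_filter, mem_powersetCard]
    refine ⟨⟨by simp [insert_subset_iff, *], card_eq_three.mpr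
      ⟨u, v, m, h.left_ne_right, h.left_ne, h.ne_right.symm, rfl⟩⟩,
      u, by simp, m, by simp, v, by simp, h.left_ne, h.left_ne_right, h.ne_right, h.1⟩

lemma sum_range_natAbs_sub {M : Type*} [AddCommMonoid M] (n : ℕ) (h : ℕ → M) :
    ∑ i ∈ range n, h ((n : ℤ) - i).natAbs = ∑ a ∈ range n, h (a + 1) := by
  rw [← sum_range_reflect]
  refine sum_congr rfl fun i hi => ?_
  rw [mem_range] at hi
  congr 1
  omega

lemma sum_range_sum_range_natAbs_sub {R : Type*} [CommRing R] (n : ℕ) (h : ℕ → R) :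
    ∑ i ∈ range n, ∑ k ∈ range n, h ((k : ℤ) - i).natAbs
      = 2 * ∑ a ∈ range n, ((n : R) - a) * h a - n * h 0 := by
  induction n with
  | zero => simp
  | succ n ih =>
    have hrow : ∑ k ∈ range n, h ((k : ℤ) - n).natAbs = ∑ a ∈ range n, h (a + 1) := by
      simp_rw [← Int.natAbs_neg ((_ : ℤ) - n), neg_sub]
      exact sum_range_natAbs_sub n h
    have hshift : ∑ a ∈ range n, h a + h n = ∑ a ∈ range n, h (a + 1) + h 0 := by
      rw [← sum_range_succ, sum_range_succ']
    simp only [sum_range_succ, sum_add_distrib, ih, hrow, sum_range_natAbs_sub, sub_self,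
      Int.natAbs_zero]
    push_cast
    simp only [add_sub_right_comm _ (1 : R), add_mul, one_mul, sum_add_distrib]
    linear_combination -2 * hshift

lemma sum_gridF_sum_gridF {R : Type*} [CommRing R] (n : ℕ) (F : ℕ → ℕ → R) :
    ∑ u ∈ gridF n, ∑ v ∈ gridF n, F (v.1 - u.1).natAbs (v.2 - u.2).natAbs
      = 2 * ∑ a ∈ range n, ((n : R) - a) * (2 * ∑ b ∈ range n, ((n : R) - b) * F a b - n * F a 0)
        - n * (2 * ∑ b ∈ range n, ((n : R) - b) * F 0 b - n * F 0 0) := by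
  have hinj : Set.InjOn (fun p : ℕ × ℕ => ((p.1 : ℤ), (p.2 : ℤ))) ↑(range n ×ˢ range n) :=
    (Prod.map_injective.mpr ⟨Nat.cast_injective, Nat.cast_injective⟩).injOn
  simp only [gridF, sum_image hinj, sum_product]
  rw [sum_congr rfl fun i _ => sum_comm]
  simp only [sum_range_sum_range_natAbs_sub n (F _)]
  exact sum_range_sum_range_natAbs_sub n
    (fun a => 2 * ∑ b ∈ range n, ((n : R) - b) * F a b - n * F a 0)

lemma sum_Icc_one_eq_sum_range {M : Type*} [AddCommMonoid M] (f : ℕ → M) (m : ℕ) :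
    ∑ a ∈ Icc 1 m, f a = ∑ a ∈ range m, f (a + 1) := by
  rw [← Ico_add_one_right_eq_Icc, range_eq_Ico, sum_Ico_add', zero_add]

lemma sum_range_cast_sub (m : ℕ) : ∑ a ∈ range m, ((m : ℚ) - a) = m * (m + 1) / 2 := by
  induction m with
  | zero => simp
  | succ m ih =>
    simp only [sum_range_succ, Nat.cast_succ, add_sub_right_comm _ (1 : ℚ), sum_add_distrib, ih,
      sum_const, card_range, nsmul_eq_mul]
    ring

lemma sum_range_cast_sub_mul (m : ℕ) :
    ∑ a ∈ range m, ((m : ℚ) - a) * a = (m - 1) * m * (m + 1) / 6 := by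
  induction m with
  | zero => simp
  | succ m ih =>
    have hid : ∑ a ∈ range m, (a : ℚ) = m * (m - 1) / 2 := by
      have := sum_range_cast_sub m
      rw [sum_sub_distrib, sum_const, card_range, nsmul_eq_mul] at this
      linarith
    simp only [sum_range_succ, Nat.cast_succ, add_sub_right_comm _ (1 : ℚ), add_mul, one_mul,
      sum_add_distrib, ih, hid]
    ring

lemma cast_sum_gridF_sum_gridF_gcd_sub_one (n : ℕ) :
    ((∑ u ∈ gridF n, ∑ v ∈ gridF n, (Int.gcd (v.1 - u.1) (v.2 - u.2) - 1) : ℕ) : ℚ)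
      = 4 * ∑ a ∈ Icc 1 (n - 1), ∑ b ∈ Icc 1 (n - 1),
          ((n : ℚ) - a) * ((n : ℚ) - b) * (Nat.gcd a b : ℚ)
        - (n : ℚ) ^ 2 * ((n : ℚ) ^ 2 - 1) / 3 := by
  simp only [Nat.cast_sum]
  refine (sum_gridF_sum_gridF n fun a b => ((Nat.gcd a b - 1 : ℕ) : ℚ)).trans ?_
  rcases n with _ | m
  · simp
  have hgcd (a b : ℕ) : ((Nat.gcd (a + 1) (b + 1) - 1 : ℕ) : ℚ) = Nat.gcd (a + 1) (b + 1) - 1 := by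
    simp [Nat.cast_sub (Nat.gcd_pos_of_pos_left _ a.succ_pos)]
  simp only [sum_range_succ', hgcd, Nat.gcd_zero_left, Nat.gcd_zero_right, Nat.add_sub_cancel,
    Nat.gcd_self, sum_Icc_one_eq_sum_range]
  push_cast
  simp only [add_sub_add_right_eq_sub, sub_zero, mul_zero, add_zero]
  have hinner (x : ℕ) : ∑ y ∈ range m, ((m : ℚ) - y) * ((Nat.gcd (x + 1) (y + 1) : ℚ) - 1)
      = ∑ y ∈ range m, ((m : ℚ) - y) * (Nat.gcd (x + 1) (y + 1) : ℚ)
        - ∑ y ∈ range m, ((m : ℚ) - y) := by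
    simp only [mul_sub_one, sum_sub_distrib]
  have houter : ∑ x ∈ range m,
        ((m : ℚ) - x) * ∑ y ∈ range m, ((m : ℚ) - y) * (Nat.gcd (x + 1) (y + 1) : ℚ)
      = ∑ x ∈ range m, ∑ y ∈ range m,
          ((m : ℚ) - x) * ((m : ℚ) - y) * (Nat.gcd (x + 1) (y + 1) : ℚ) := by
    simp only [mul_sum, mul_assoc]
  have hsummand (x : ℕ) : ((m : ℚ) - x) *
        (2 * (∑ y ∈ range m, ((m : ℚ) - y) * (Nat.gcd (x + 1) (y + 1) : ℚ)
          - ∑ y ∈ range m, ((m : ℚ) - y) + (m + 1) * x) - (m + 1) * x)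
      = 2 * (((m : ℚ) - x) * ∑ y ∈ range m, ((m : ℚ) - y) * (Nat.gcd (x + 1) (y + 1) : ℚ))
        - 2 * (∑ y ∈ range m, ((m : ℚ) - y)) * ((m : ℚ) - x) + (m + 1) * (((m : ℚ) - x) * x) := by
    ring
  simp only [hinner]
  rw [sum_congr rfl fun x _ => hsummand x, sum_add_distrib, sum_sub_distrib, ← mul_sum, ← mul_sum,
    ← mul_sum, houter, sum_range_cast_sub, sum_range_cast_sub_mul]
  ring

open Classical in
theorem collinear_triple_count (n : ℕ) :
    ((((gridF n).powersetCard 3).filter (fun s =>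
        ∃ p ∈ s, ∃ q ∈ s, ∃ r ∈ s, p ≠ q ∧ p ≠ r ∧ q ≠ r ∧ Collinear3 p q r)).card : ℚ) =
      2 * ∑ a ∈ Finset.Icc 1 (n - 1), ∑ b ∈ Finset.Icc 1 (n - 1),
          ((n : ℚ) - a) * ((n : ℚ) - b) * (Nat.gcd a b : ℚ)
        - (n : ℚ) ^ 2 * ((n : ℚ) ^ 2 - 1) / 6 := by
  have hsum := cast_sum_gridF_sum_gridF_gcd_sub_one n
  rw [← card_betweenTriples, card_betweenTriples_eq_two_mul] at hsum
  push_cast at hsum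
  linarith
end

section
/- Fix λ with 0 < λ < π/√3 and set q_n = t_n / C(n², 3), where t_n = (3/π²) n⁴ log n + O(n⁴). Then log [ C(n², ⌊λn⌋) · (1 − q_n)^{C(⌊λn⌋, 3)} ] ∼ (λ − 3λ³/π²) · n · log n as n → ∞; in particular this expression tends to +∞ if λ < π/√3 and to −∞ if λ > π/√3. -/
/-!
Write `k = ⌊λn⌋` and `q_n = t_n / C(n², 3)`; eventually the logarithm splits as
`log C(n², k) + C(k, 3) · log (1 - q_n)`.
The bounds `(N / 2k)^k ≤ C(N, k) ≤ (eN / k)^k` give `log C(n², k) = k log (n² / k) + O(n)`, which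
is `~ λ n log n`. Next `q_n ~ 18 log n / (π² n²) → 0`, so `log (1 - q_n) ~ -q_n`, and with
`C(k, 3) ~ λ³ n³ / 6` the second term is `~ -(3λ³/π²) n log n`. The two equivalents add up unless
their coefficients cancel, i.e. unless `λ = π/√3`, and the sign of `λ - 3λ³/π²` decides the limit.
-/

open Filter Asymptotics Real
open scoped Nat Topology

lemma isEquivalent_log_one_sub : (fun x : ℝ => log (1 - x)) ~[𝓝 0] fun x => -x := by
  have hderiv : HasDerivAt (fun x : ℝ => log (1 - x)) (-1) 0 := by
    simpa using ((hasDerivAt_id (0 : ℝ)).const_sub 1).log (by norm_num)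
  refine IsLittleO.isEquivalent ?_
  simpa [Pi.sub_def, ← sub_eq_add_neg] using hderiv.isLittleO.neg_right

lemma isLittleO_const_log_natCast {c : ℝ} :
    (fun _ : ℕ => c) =o[atTop] fun n => log n :=
  isLittleO_const_log_atTop.comp_tendsto tendsto_natCast_atTop_atTop

lemma tendsto_log_div_natCast_sq :
    Tendsto (fun n : ℕ => log n / (n : ℝ) ^ 2) atTop (𝓝 0) := by
  have := ((tendsto_pow_log_div_mul_add_atTop 1 0 1 one_ne_zero).mul
    tendsto_inv_atTop_zero).comp tendsto_natCast_atTop_atTop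
  simp only [pow_one, one_mul, add_zero, mul_zero] at this
  refine this.congr fun n => ?_
  simp only [Function.comp_apply]; ring

lemma tendsto_natCast_mul_log_atTop : Tendsto (fun n : ℕ => (n : ℝ) * log n) atTop atTop :=
  tendsto_natCast_atTop_atTop.atTop_mul_atTop₀ (tendsto_log_atTop.comp tendsto_natCast_atTop_atTop)

lemma Asymptotics.IsEquivalent.add_of_const_mul {α β : Type*} [NormedField β] {l : Filter α}
    {u v h : α → β} {a b : β}
    (hu : u ~[l] fun x => a * h x) (hv : v ~[l] fun x => b * h x) (hab : a + b ≠ 0) :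
    u + v ~[l] fun x => (a + b) * h x := by
  have hu' := hu.isLittleO.trans_isBigO (isBigO_const_mul_self a h l)
  have hv' := hv.isLittleO.trans_isBigO (isBigO_const_mul_self b h l)
  refine IsLittleO.isEquivalent ?_
  refine ((hu'.add hv').trans_isBigO (isBigO_self_const_mul hab h l)).congr_left fun x => ?_
  simp only [Pi.add_apply, Pi.sub_apply]; ring

lemma choose_le_exp_mul_div_pow (N : ℕ) {k : ℕ} (hk : 0 < k) :
    (N.choose k : ℝ) ≤ (exp 1 * N / k) ^ k := by
  have hk' : (0 : ℝ) < k := by exact_mod_cast hk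
  have hfac : (k : ℝ) ^ k / k ! ≤ exp k := Real.pow_div_factorial_le_exp _ hk'.le k
  calc (N.choose k : ℝ) ≤ (N : ℝ) ^ k / k ! := Nat.choose_le_pow_div k N
    _ = ((N : ℝ) / k) ^ k * ((k : ℝ) ^ k / k !) := by
        rw [div_pow, div_mul_div_cancel₀ (by positivity)]
    _ ≤ ((N : ℝ) / k) ^ k * exp k := by gcongr
    _ = (exp 1 * N / k) ^ k := by
        rw [← exp_one_pow, mul_div_assoc, mul_pow, mul_comm]

lemma div_two_mul_pow_le_choose {N k : ℕ} (hkN : 2 * k ≤ N) :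
    ((N : ℝ) / (2 * k)) ^ k ≤ N.choose k := by
  have hsub : (N : ℝ) / 2 ≤ ((N + 1 - k : ℕ) : ℝ) := by
    rw [Nat.cast_sub (by omega)]; push_cast
    have : (2 * k : ℝ) ≤ N := by exact_mod_cast hkN
    linarith
  calc ((N : ℝ) / (2 * k)) ^ k = ((N : ℝ) / 2) ^ k / (k : ℝ) ^ k := by
        rw [← div_pow, div_div]
    _ ≤ ((N + 1 - k : ℕ) : ℝ) ^ k / k ! := by
        gcongr
        exact_mod_cast Nat.factorial_le_pow k
    _ ≤ N.choose k := Nat.pow_le_choose k N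

lemma abs_log_choose_sub_mul_log_div_le {N k : ℕ} (hk : 0 < k) (hkN : 2 * k ≤ N) :
    |log (N.choose k) - k * log (N / k)| ≤ k := by
  have hk' : (0 : ℝ) < k := by exact_mod_cast hk
  have hN : (0 : ℝ) < N := by exact_mod_cast (show 0 < N by omega)
  have hlog2 : log 2 ≤ 1 := by
    have := log_two_lt_d9; linarith
  have hupper : log (N.choose k) ≤ k * log (N / k) + k := by
    have := log_le_log (by exact_mod_cast Nat.choose_pos (by omega)) (choose_le_exp_mul_div_pow N hk)
    rw [log_pow, mul_div_assoc, log_mul (exp_pos 1).ne' (by positivity), log_exp] at this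
    linarith
  have hlower : k * log (N / k) - k ≤ log (N.choose k) := by
    have := log_le_log (by positivity) (div_two_mul_pow_le_choose hkN)
    rw [log_pow, mul_comm (2 : ℝ), ← div_div, log_div (by positivity) two_ne_zero] at this
    nlinarith
  rw [abs_le]; constructor <;> linarith

lemma tendsto_floor_mul_natCast_div {lam : ℝ} (hlam : 0 ≤ lam) :
    Tendsto (fun n : ℕ => (⌊lam * n⌋₊ : ℝ) / n) atTop (𝓝 lam) :=
  (tendsto_nat_floor_mul_div_atTop hlam).comp tendsto_natCast_atTop_atTop

lemma isEquivalent_floor_mul {lam : ℝ} (hlam : 0 < lam) :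
    (fun n : ℕ => (⌊lam * n⌋₊ : ℝ)) ~[atTop] fun n => lam * n := by
  refine isEquivalent_of_tendsto_one ?_
  have := (tendsto_floor_mul_natCast_div hlam.le).div_const lam
  rw [div_self hlam.ne'] at this
  refine this.congr fun n => ?_
  simp only [Pi.div_apply]; rw [div_div, mul_comm]

lemma eventually_floor_mul_le_sq (lam : ℝ) : ∀ᶠ n : ℕ in atTop, ⌊lam * n⌋₊ ≤ n ^ 2 := by
  filter_upwards [tendsto_natCast_atTop_atTop.eventually_ge_atTop lam] with n hn
  refine Nat.floor_le_of_le ?_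
  push_cast
  nlinarith [(Nat.cast_nonneg n : (0 : ℝ) ≤ n)]

lemma isEquivalent_choose_three_floor_mul {lam : ℝ} (hlam : 0 < lam) :
    (fun n : ℕ => ((⌊lam * n⌋₊).choose 3 : ℝ)) ~[atTop] fun n => (lam * n) ^ 3 / 6 := by
  have := (isEquivalent_choose 3).comp_tendsto (tendsto_nat_floor_mul_atTop lam hlam)
  exact this.trans (((isEquivalent_floor_mul hlam).pow 3).div IsEquivalent.refl)

lemma isEquivalent_log_sq_div_floor_mul {lam : ℝ} (hlam : 0 < lam) :
    (fun n : ℕ => log ((n : ℝ) ^ 2 / ⌊lam * n⌋₊)) ~[atTop] fun n => log n := by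
  have hratio := tendsto_floor_mul_natCast_div hlam.le
  have hlog_ratio : (fun n : ℕ => log ((⌊lam * n⌋₊ : ℝ) / n)) =o[atTop] fun n => log n :=
    ((hratio.log hlam.ne').isBigO_one ℝ).trans_isLittleO isLittleO_const_log_natCast
  refine (IsEquivalent.refl.sub_isLittleO hlog_ratio).congr_left ?_
  filter_upwards [hratio.eventually (lt_mem_nhds hlam), eventually_gt_atTop 0] with n hpos hn
  have hn' : (n : ℝ) ≠ 0 := by exact_mod_cast hn.ne'
  rw [Pi.sub_apply, ← log_div hn' hpos.ne', div_div_eq_mul_div, sq]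

lemma isBigO_log_choose_sq_floor_mul_sub {lam : ℝ} (hlam : 0 < lam) :
    (fun n : ℕ => log ((n ^ 2).choose ⌊lam * n⌋₊) - ⌊lam * n⌋₊ * log ((n : ℝ) ^ 2 / ⌊lam * n⌋₊))
      =O[atTop] fun n => (n : ℝ) := by
  refine IsBigO.of_bound lam ?_
  filter_upwards [(tendsto_nat_floor_mul_atTop lam hlam).eventually_gt_atTop 0,
    tendsto_natCast_atTop_atTop.eventually_ge_atTop (2 * lam)] with n hk hn
  have hkn : (⌊lam * n⌋₊ : ℝ) ≤ lam * n := Nat.floor_le (by positivity)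
  have hkN : 2 * ⌊lam * n⌋₊ ≤ n ^ 2 := by
    have : (2 * ⌊lam * n⌋₊ : ℝ) ≤ (n : ℝ) ^ 2 := by nlinarith
    exact_mod_cast this
  have := abs_log_choose_sub_mul_log_div_le hk hkN
  push_cast at this
  rw [norm_eq_abs, RCLike.norm_natCast]
  linarith

lemma isEquivalent_log_choose_sq_floor_mul {lam : ℝ} (hlam : 0 < lam) :
    (fun n : ℕ => log ((n ^ 2).choose ⌊lam * n⌋₊)) ~[atTop] fun n => lam * (n * log n) := by
  have hmain : (fun n : ℕ => ⌊lam * n⌋₊ * log ((n : ℝ) ^ 2 / ⌊lam * n⌋₊)) ~[atTop]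
      fun n => lam * (n * log n) :=
    ((isEquivalent_floor_mul hlam).mul (isEquivalent_log_sq_div_floor_mul hlam)).congr_right
      (Eventually.of_forall fun n => mul_assoc _ _ _)
  have hsmall : (fun n : ℕ => (n : ℝ)) =o[atTop] fun n => lam * (n * log n) := by
    simpa using ((isBigO_refl (fun n : ℕ => (n : ℝ)) atTop).mul_isLittleO
      (isLittleO_const_log_natCast (c := 1))).const_mul_right hlam.ne'
  refine (hmain.add_isLittleO
    ((isBigO_log_choose_sq_floor_mul_sub hlam).trans_isLittleO hsmall)).congr_left ?_
  exact Eventually.of_forall fun n => add_sub_cancel _ _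

section

variable {t : ℕ → ℝ} {a : ℝ}

lemma isEquivalent_of_sub_isBigO_pow_four (ha : a ≠ 0)
    (ht : (fun n : ℕ => t n - a * (n : ℝ) ^ 4 * log n) =O[atTop] fun n => (n : ℝ) ^ 4) :
    t ~[atTop] fun n => a * (n : ℝ) ^ 4 * log n := by
  have hsmall : (fun n : ℕ => (n : ℝ) ^ 4) =o[atTop] fun n => a * (n : ℝ) ^ 4 * log n := by
    simpa [mul_assoc] using ((isBigO_refl (fun n : ℕ => (n : ℝ) ^ 4) atTop).mul_isLittleO
      (isLittleO_const_log_natCast (c := 1))).const_mul_right ha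
  exact IsLittleO.isEquivalent (ht.trans_isLittleO hsmall)

lemma isEquivalent_div_choose_three_sq (ht : t ~[atTop] fun n => a * (n : ℝ) ^ 4 * log n) :
    (fun n : ℕ => t n / ((n ^ 2).choose 3 : ℝ)) ~[atTop]
      fun n => 6 * a * (log n / (n : ℝ) ^ 2) := by
  have hchoose := (isEquivalent_choose 3).comp_tendsto
    (tendsto_pow_atTop two_ne_zero : Tendsto (fun n : ℕ => n ^ 2) atTop atTop)
  refine (ht.div hchoose).congr_right ?_
  filter_upwards [eventually_ne_atTop 0] with n hn
  have hn' : (n : ℝ) ≠ 0 := by exact_mod_cast hn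
  simp only [Pi.div_apply, Function.comp_apply, Nat.factorial, Nat.cast_pow]
  field_simp
  push_cast
  ring

lemma tendsto_div_choose_three_sq (ht : t ~[atTop] fun n => a * (n : ℝ) ^ 4 * log n) :
    Tendsto (fun n : ℕ => t n / ((n ^ 2).choose 3 : ℝ)) atTop (𝓝 0) := by
  simpa using (isEquivalent_div_choose_three_sq ht).symm.tendsto_nhds
    (tendsto_log_div_natCast_sq.const_mul (6 * a))

lemma isEquivalent_choose_three_floor_mul_log_one_sub {lam : ℝ} (hlam : 0 < lam)
    (ht : t ~[atTop] fun n => a * (n : ℝ) ^ 4 * log n) :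
    (fun n : ℕ => ((⌊lam * n⌋₊).choose 3 : ℝ) * log (1 - t n / ((n ^ 2).choose 3 : ℝ)))
      ~[atTop] fun n => -(a * lam ^ 3) * (n * log n) := by
  have hlog := (isEquivalent_log_one_sub.comp_tendsto (tendsto_div_choose_three_sq ht)).trans
    (isEquivalent_div_choose_three_sq ht).neg
  refine ((isEquivalent_choose_three_floor_mul hlam).mul hlog).congr_right ?_
  filter_upwards [eventually_ne_atTop 0] with n hn
  have hn' : (n : ℝ) ≠ 0 := by exact_mod_cast hn
  simp only [Pi.mul_apply]
  field_simp

end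

lemma log_choose_mul_pow_eventuallyEq {lam : ℝ} {q : ℕ → ℝ} (P : ℕ → ℕ)
    (hq : Tendsto q atTop (𝓝 0)) :
    (fun n : ℕ => log (((n ^ 2).choose ⌊lam * n⌋₊ : ℝ) * (1 - q n) ^ P n)) =ᶠ[atTop]
      fun n => log ((n ^ 2).choose ⌊lam * n⌋₊) + P n * log (1 - q n) := by
  filter_upwards [eventually_floor_mul_le_sq lam, hq.eventually (gt_mem_nhds one_pos)]
    with n hk hq1
  have hC : ((n ^ 2).choose ⌊lam * n⌋₊ : ℝ) ≠ 0 := by exact_mod_cast (Nat.choose_pos hk).ne'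
  rw [log_mul hC (pow_ne_zero _ (by linarith)), log_pow]

lemma lt_div_sqrt_three_iff {x a : ℝ} (hx : 0 ≤ x) (ha : 0 ≤ a) :
    x < a / √3 ↔ 3 * x ^ 2 < a ^ 2 := by
  rw [lt_div_iff₀ (by positivity), ← pow_lt_pow_iff_left₀ (by positivity) ha two_ne_zero,
    mul_pow, sq_sqrt (by norm_num), mul_comm]

lemma div_sqrt_three_lt_iff {x a : ℝ} (hx : 0 ≤ x) (ha : 0 ≤ a) :
    a / √3 < x ↔ a ^ 2 < 3 * x ^ 2 := by
  rw [div_lt_iff₀ (by positivity), ← pow_lt_pow_iff_left₀ ha (by positivity) two_ne_zero,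
    mul_pow, sq_sqrt (by norm_num), mul_comm]

lemma sub_three_mul_pow_three_div_sq_pos_iff {x a : ℝ} (hx : 0 < x) (ha : 0 < a) :
    0 < x - 3 * x ^ 3 / a ^ 2 ↔ x < a / √3 := by
  rw [lt_div_sqrt_three_iff hx.le ha.le, sub_pos, div_lt_iff₀ (by positivity)]
  constructor <;> intro h <;> nlinarith

lemma sub_three_mul_pow_three_div_sq_neg_iff {x a : ℝ} (hx : 0 < x) (ha : 0 < a) :
    x - 3 * x ^ 3 / a ^ 2 < 0 ↔ a / √3 < x := by
  rw [div_sqrt_three_lt_iff hx.le ha.le, sub_neg, lt_div_iff₀ (by positivity)]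
  constructor <;> intro h <;> nlinarith

theorem heuristic_count_asymptotics (lam : ℝ) (hlam : 0 < lam)
    (t : ℕ → ℝ)
    (ht : (fun n : ℕ => t n - 3 / π ^ 2 * (n : ℝ) ^ 4 * Real.log n)
      =O[atTop] (fun n : ℕ => (n : ℝ) ^ 4)) :
    (lam ≠ π / Real.sqrt 3 →
      (fun n : ℕ => Real.log (((n ^ 2).choose ⌊lam * n⌋₊ : ℝ) *
          (1 - t n / ((n ^ 2).choose 3 : ℝ)) ^ ((⌊lam * n⌋₊).choose 3)))
        ~[atTop] (fun n : ℕ => (lam - 3 * lam ^ 3 / π ^ 2) * n * Real.log n)) ∧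
    (lam < π / Real.sqrt 3 →
      Tendsto (fun n : ℕ => Real.log (((n ^ 2).choose ⌊lam * n⌋₊ : ℝ) *
          (1 - t n / ((n ^ 2).choose 3 : ℝ)) ^ ((⌊lam * n⌋₊).choose 3)))
        atTop atTop) ∧
    (π / Real.sqrt 3 < lam →
      Tendsto (fun n : ℕ => Real.log (((n ^ 2).choose ⌊lam * n⌋₊ : ℝ) *
          (1 - t n / ((n ^ 2).choose 3 : ℝ)) ^ ((⌊lam * n⌋₊).choose 3)))
        atTop atBot) := by
  have ht' := isEquivalent_of_sub_isBigO_pow_four (by positivity) ht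
  have hc_eq : lam + -(3 / π ^ 2 * lam ^ 3) = lam - 3 * lam ^ 3 / π ^ 2 := by ring
  have hequiv (hc : lam - 3 * lam ^ 3 / π ^ 2 ≠ 0) :
      (fun n : ℕ => log (((n ^ 2).choose ⌊lam * n⌋₊ : ℝ) *
          (1 - t n / ((n ^ 2).choose 3 : ℝ)) ^ ((⌊lam * n⌋₊).choose 3)))
        ~[atTop] fun n : ℕ => (lam - 3 * lam ^ 3 / π ^ 2) * n * log n := by
    have hsum := (isEquivalent_log_choose_sq_floor_mul hlam).add_of_const_mul
      (isEquivalent_choose_three_floor_mul_log_one_sub hlam ht') (hc_eq ▸ hc)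
    refine (hsum.congr_left (log_choose_mul_pow_eventuallyEq _
      (tendsto_div_choose_three_sq ht')).symm).congr_right (Eventually.of_forall fun n => ?_)
    simp only [hc_eq, mul_assoc]
  have hpos := sub_three_mul_pow_three_div_sq_pos_iff hlam pi_pos
  have hneg := sub_three_mul_pow_three_div_sq_neg_iff hlam pi_pos
  refine ⟨fun hne => hequiv ?_, fun hlt => ?_, fun hgt => ?_⟩
  · exact hne.lt_or_gt.elim (fun h => (hpos.2 h).ne') fun h => (hneg.2 h).ne
  · have hc := hpos.2 hlt
    refine (hequiv hc.ne').symm.tendsto_atTop ?_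
    simpa only [mul_assoc] using tendsto_natCast_mul_log_atTop.const_mul_atTop hc
  · have hc := hneg.2 hgt
    refine (hequiv hc.ne).symm.tendsto_atBot ?_
    simpa only [mul_assoc] using tendsto_natCast_mul_log_atTop.const_mul_atTop_of_neg hc
end
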